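/- Let A = R[x,y]/(xy - t^l) and let E_{i,j} = A⟨ξ₁,ξ₂⟩/(t^j ξ₁ - x ξ₂, t^i ξ₂ - y ξ₁) with i+j = l, i,j > 0. Then the localization of E_{i,j} at x (i.e., E_{i,j} ⊗_A A[x^{-1}]) is a free A[x^{-1}]-module of rank 1 generated by the image of ξ₁, with ξ₂ = t^j ξ₁ / x. -/

import Mathlib

/-
After inverting `x`, the relation `t^j ξ₁ = x ξ₂` says `ξ₂ = (t^j / x) ξ₁`, so `ξ₁` generates.
It is also torsion-free: if `b ξ₁ = 0` in `E`, write `(b, 0) = p (t^j, -x) + q (y, -t^i)`;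
then `p x = -q t^i`, and `xy = t^l` gives `x b = t^j (p x + q t^i) = 0`, so `b = 0` in `A[x⁻¹]`.
-/

set_option synthInstance.maxHeartbeats 1000000
set_option maxHeartbeats 1000000

open MvPolynomial

section LocalizedModule

variable {R M : Type*} [CommRing R] [AddCommGroup M] [Module R M] {S : Submonoid R}

theorem LocalizedModule.mk_smul_mkLinearMap_eq {r : R} {s : S} {m m' : M}
    (h : r • m = (s : R) • m') :
    Localization.mk r s • LocalizedModule.mkLinearMap S M m = LocalizedModule.mkLinearMap S M m' := by
  rw [LocalizedModule.mkLinearMap_apply, LocalizedModule.mkLinearMap_apply,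
    LocalizedModule.mk_smul_mk, h, mul_one]
  exact LocalizedModule.mk_cancel s m'

theorem LocalizedModule.eq_zero_of_smul_mkLinearMap_eq_zero {m : M}
    (hm : ∀ a : R, a • m = 0 → ∃ s : S, (s : R) * a = 0) (c : Localization S)
    (hc : c • LocalizedModule.mkLinearMap S M m = 0) : c = 0 := by
  obtain ⟨⟨a, s⟩, rfl⟩ := IsLocalization.mk'_surjective S c
  rw [← IsLocalizedModule.mk'_one S, IsLocalizedModule.mk'_smul_mk', mul_one,
    IsLocalizedModule.mk'_eq_zero'] at hc
  obtain ⟨s', hs'⟩ := hc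
  obtain ⟨u, hu⟩ := hm ((s' : R) * a) (by rwa [mul_smul])
  exact (IsLocalization.mk'_eq_zero_iff a s).2 ⟨u * s', by rw [Submonoid.coe_mul, mul_assoc, hu]⟩

end LocalizedModule

namespace stmt11

variable (R : Type*) [CommRing R] (t : R) (l : ℕ)

/-- `A = R[x,y]/(xy - t^l)`, with `x = X 0`, `y = X 1`. -/
noncomputable abbrev A := MvPolynomial (Fin 2) R ⧸
  Ideal.span {(X 0 * X 1 - C (t ^ l) : MvPolynomial (Fin 2) R)}

noncomputable def x : A R t l := Ideal.Quotient.mk _ (X 0)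
noncomputable def y : A R t l := Ideal.Quotient.mk _ (X 1)
noncomputable def tA : A R t l := Ideal.Quotient.mk _ (C t)

/-- `E i j` is the `A`-module with generators `ξ₁, ξ₂` and relations
`t^j ξ₁ = x ξ₂` and `t^i ξ₂ = y ξ₁`. -/
noncomputable def E (i j : ℕ) :=
  (A R t l × A R t l) ⧸
    (Submodule.span (A R t l) {((tA R t l ^ j, -(x R t l)) : A R t l × A R t l),
      ((y R t l, -(tA R t l ^ i)) : A R t l × A R t l)})

noncomputable instance (i j : ℕ) : AddCommGroup (E R t l i j) :=
  Submodule.Quotient.addCommGroup _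

noncomputable instance (i j : ℕ) : Module (A R t l) (E R t l i j) :=
  Submodule.Quotient.module _

/-- `ξ₁` -/
noncomputable def ξ₁ (i j : ℕ) : E R t l i j := Submodule.Quotient.mk (1, 0)
/-- `ξ₂` -/
noncomputable def ξ₂ (i j : ℕ) : E R t l i j := Submodule.Quotient.mk (0, 1)

/-- The multiplicative set of powers of `x`. -/
noncomputable abbrev S : Submonoid (A R t l) := Submonoid.powers (x R t l)

theorem x_mul_y : x R t l * y R t l = tA R t l ^ l := by
  unfold x y tA
  rw [← map_mul, ← map_pow, ← C_pow, Ideal.Quotient.eq]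
  exact Ideal.subset_span rfl

theorem tA_pow_smul_ξ₁ (i j : ℕ) : tA R t l ^ j • ξ₁ R t l i j = x R t l • ξ₂ R t l i j := by
  unfold ξ₁ ξ₂ E
  rw [← Submodule.Quotient.mk_smul, ← Submodule.Quotient.mk_smul, Submodule.Quotient.eq]
  exact Submodule.subset_span (Or.inl (by simp))

theorem span_ξ₁_ξ₂ (i j : ℕ) :
    Submodule.span (A R t l) {ξ₁ R t l i j, ξ₂ R t l i j} = ⊤ := by
  refine eq_top_iff.2 fun m _ ↦ ?_
  induction m using Submodule.Quotient.induction_on with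
  | H p =>
    refine Submodule.mem_span_pair.2 ⟨p.1, p.2, ?_⟩
    unfold ξ₁ ξ₂ E
    rw [← Submodule.Quotient.mk_smul, ← Submodule.Quotient.mk_smul, ← Submodule.Quotient.mk_add]
    congr 1
    ext <;> simp

theorem x_mul_eq_zero_of_smul_ξ₁_eq_zero (i j : ℕ) (hij : i + j = l) (b : A R t l)
    (hb : b • ξ₁ R t l i j = 0) : x R t l * b = 0 := by
  unfold ξ₁ E at hb
  rw [← Submodule.Quotient.mk_smul, Submodule.Quotient.mk_eq_zero, Submodule.mem_span_pair] at hb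
  obtain ⟨p, q, hpq⟩ := hb
  obtain ⟨h₁, h₂⟩ := Prod.ext_iff.1 hpq
  simp only [Prod.smul_fst, Prod.smul_snd, Prod.fst_add, Prod.snd_add, smul_eq_mul,
    mul_one, mul_zero] at h₁ h₂
  have hxy : tA R t l ^ i * tA R t l ^ j = x R t l * y R t l := by
    rw [x_mul_y, ← pow_add, hij]
  linear_combination -(x R t l) * h₁ - q * hxy - tA R t l ^ j * h₂

theorem mk_smul_mkLinearMap_ξ₁ (i j : ℕ) :
    Localization.mk (tA R t l ^ j) ⟨x R t l, Submonoid.mem_powers _⟩ •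
        LocalizedModule.mkLinearMap (S R t l) (E R t l i j) (ξ₁ R t l i j)
      = LocalizedModule.mkLinearMap (S R t l) (E R t l i j) (ξ₂ R t l i j) :=
  LocalizedModule.mk_smul_mkLinearMap_eq (tA_pow_smul_ξ₁ R t l i j)

/-- the localization of `E_{i,j}` at `x` is a free `A[x⁻¹]`-module of
rank one generated by the image of `ξ₁`: the image of `ξ₁` spans, it has trivial
annihilator, and `ξ₂ = t^j ξ₁ / x`. -/
theorem stmt11 (i j : ℕ) (hij : i + j = l) :
    (Submodule.span (Localization (S R t l))
        {(LocalizedModule.mkLinearMap (S R t l) (E R t l i j)) (ξ₁ R t l i j)} = ⊤) ∧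
    (∀ c : Localization (S R t l),
      c • (LocalizedModule.mkLinearMap (S R t l) (E R t l i j)) (ξ₁ R t l i j) = 0 →
        c = 0) ∧
    (Localization.mk (tA R t l ^ j) ⟨x R t l, Submonoid.mem_powers _⟩ •
        (LocalizedModule.mkLinearMap (S R t l) (E R t l i j)) (ξ₁ R t l i j)
      = (LocalizedModule.mkLinearMap (S R t l) (E R t l i j)) (ξ₂ R t l i j)) := by
  have hξ₂ := mk_smul_mkLinearMap_ξ₁ R t l i j
  refine ⟨?_, fun c ↦ LocalizedModule.eq_zero_of_smul_mkLinearMap_eq_zero ?_ c, hξ₂⟩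
  · have hpair := span_eq_top_of_isLocalizedModule (Localization (S R t l)) (S R t l)
      (LocalizedModule.mkLinearMap (S R t l) (E R t l i j)) (span_ξ₁_ξ₂ R t l i j)
    rwa [Set.image_pair, Set.pair_comm, Submodule.span_insert_eq_span
      (hξ₂ ▸ Submodule.smul_mem _ _ (Submodule.mem_span_singleton_self _))] at hpair
  · intro b hb
    exact ⟨⟨x R t l, Submonoid.mem_powers _⟩, x_mul_eq_zero_of_smul_ξ₁_eq_zero R t l i j hij b hb⟩

end stmt11
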